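/- arXiv:1004.3661 — 2 statements merged into one kernel-verified Lean document; each statement's English description precedes it below -/
import Mathlib

section
/- Let -1 < w ≤ -1/3, and let Σ², Ω, Ω_k, v² be real numbers with Σ² ≥ 0, Ω ≥ 0, Ω_k ≥ 0, 0 ≤ v² ≤ 1, and Σ² + Ω_k + Ω = 1. Set G₊ = 1 + w v² and q = 2Σ² + ½ G₊⁻¹ [1 + 3w + (1 - w)v²] Ω. Then 2q - (1 + 3w) = 4Σ² - (1 + 3w)(1 - Ω) + (1 - 3w)(1 + w) G₊⁻¹ v² Ω ≥ 0. -/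
theorem stmt_1 (w S2 Ω Ωk v2 : ℝ)
    (hw1 : -1 < w) (hw2 : w ≤ -1/3)
    (hS : 0 ≤ S2) (hΩ : 0 ≤ Ω) (hΩk : 0 ≤ Ωk)
    (hv1 : 0 ≤ v2) (hv2 : v2 ≤ 1)
    (hGauss : S2 + Ωk + Ω = 1) :
    let G := 1 + w * v2
    let q := 2 * S2 + (1/2) * G⁻¹ * (1 + 3*w + (1 - w) * v2) * Ω
    2 * q - (1 + 3*w) =
      4 * S2 - (1 + 3*w) * (1 - Ω) + (1 - 3*w) * (1 + w) * G⁻¹ * v2 * Ω ∧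
    0 ≤ 2 * q - (1 + 3*w) := by
  intro G q
  have hG : 0 < G := by
    have : w * v2 > -1 := by nlinarith
    simp only [G]; linarith
  have hGne : G ≠ 0 := ne_of_gt hG
  have heq : 2 * q - (1 + 3*w) =
      4 * S2 - (1 + 3*w) * (1 - Ω) + (1 - 3*w) * (1 + w) * G⁻¹ * v2 * Ω := by
    simp only [q, G] at *
    field_simp
    ring
  refine ⟨heq, ?_⟩
  rw [heq]
  have hGi : 0 ≤ G⁻¹ := le_of_lt (inv_pos.mpr hG)
  have h1 : 0 ≤ (1 - 3*w) * (1 + w) * G⁻¹ * v2 * Ω :=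
    mul_nonneg (mul_nonneg (mul_nonneg (mul_nonneg (by linarith) (by linarith)) hGi) hv1) hΩ
  nlinarith [h1]
end

section
/- For 3/7 < w < 1, Hewitt's fixed point satisfies the Gauss constraint: with Σ₊ = (3w+1)/8, Σ̄ = √3(7w-3)/8, Σ̃² = 0, Σ̌² = 3(1-w)(11w+1)(7w-3)/(16(17w-1)), and Ω_k = 3(1-w)(5w+1)(3w-1)/(4(17w-1)), the quantity Ω := 1 - Σ₊² - Σ̄² - Σ̃² - Σ̌² - Ω_k is strictly positive. -/
/-! Over the common denominator `4 (17 w - 1)` the matter density of Hewitt's point factors as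
`Ω = 3 (1 - w) (21 w² + 18 w + 1) / (4 (17 w - 1))`, and every factor is positive once
`1/17 < w < 1`. -/

lemma hewitt_density_eq (w : ℝ) (hw : 17 * w - 1 ≠ 0) :
    1 - ((3*w + 1) / 8) ^ 2 - (Real.sqrt 3 * (7*w - 3) / 8) ^ 2 - 0
      - 3 * (1 - w) * (11*w + 1) * (7*w - 3) / (16 * (17*w - 1))
      - 3 * (1 - w) * (5*w + 1) * (3*w - 1) / (4 * (17*w - 1))
      = 3 * (1 - w) * (21 * w ^ 2 + 18 * w + 1) / (4 * (17 * w - 1)) := by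
  have hsqrt : Real.sqrt 3 ^ 2 = 3 := Real.sq_sqrt (by norm_num)
  simp only [div_pow, mul_pow, hsqrt]
  field_simp [show w * 17 - 1 ≠ 0 by rwa [mul_comm]]
  ring

lemma hewitt_density_factored_pos (w : ℝ) (hw1 : 1 / 17 < w) (hw2 : w < 1) :
    0 < 3 * (1 - w) * (21 * w ^ 2 + 18 * w + 1) / (4 * (17 * w - 1)) := by
  have hquad : 0 < 21 * w ^ 2 + 18 * w + 1 := by positivity
  have hnum : 0 < 3 * (1 - w) := by linarith
  have hden : 0 < 4 * (17 * w - 1) := by linarith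
  exact div_pos (mul_pos hnum hquad) hden

theorem stmt_4 (w : ℝ) (hw1 : 3/7 < w) (hw2 : w < 1) :
    let Sp : ℝ := (3*w + 1) / 8
    let Sb : ℝ := Real.sqrt 3 * (7*w - 3) / 8
    let St2 : ℝ := 0
    let Sc2 : ℝ := 3 * (1 - w) * (11*w + 1) * (7*w - 3) / (16 * (17*w - 1))
    let Ωk : ℝ := 3 * (1 - w) * (5*w + 1) * (3*w - 1) / (4 * (17*w - 1))
    0 < 1 - Sp ^ 2 - Sb ^ 2 - St2 - Sc2 - Ωk := by
  intro Sp Sb St2 Sc2 Ωk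
  rw [hewitt_density_eq w (by linarith)]
  exact hewitt_density_factored_pos w (by linarith) hw2
end
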